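/- Let n, k ∈ ℕ with 3 ≤ k ≤ n−1, and let 𝒯 = (T,w) be a weighted tree with leaf set [n] that has an edge ē dividing [n] into two sets each of cardinality strictly less than k. Then for every z ∈ ℝ there exists a weight function w′ on the same tree T such that D_I((T,w′)) = D_I(𝒯) for every k-subset I of [n] and D_tot((T,w′)) = D_tot(𝒯) − ((n−k)/k)·z. (Namely, w′ adds z to the weight of ē and subtracts z/k from the weight of every twig.) -/

import Mathlib

/-- A weighted finite tree with leaf set labelled by `Fin n`:
a finite vertex type `V`, a tree `G` on `V`, an injective labelling `leaf` of the
degree-one vertices by `Fin n` (every vertex of degree one is a labelled leaf),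
and a weight function `w` on edges (zero off the edge set). -/
structure WTree (n : ℕ) where
  V : Type
  fintypeV : Fintype V
  G : SimpleGraph V
  isTree : G.IsTree
  leaf : Fin n → V
  leafInj : Function.Injective leaf
  leafSpec : ∀ v : V, (G.neighborSet v).ncard = 1 ↔ v ∈ Set.range leaf
  w : Sym2 V → ℝ
  wSupport : ∀ e, e ∉ G.edgeSet → w e = 0

namespace WTree

variable {n : ℕ}

/-- The degree of a vertex. -/
noncomputable def deg (T : WTree n) (v : T.V) : ℕ := (T.G.neighborSet v).ncard

/-- A node is a vertex of degree `> 2`. -/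
def IsNode (T : WTree n) (v : T.V) : Prop := 2 < T.deg v

/-- A tree is essential if it has no vertices of degree `2`. -/
def Essential (T : WTree n) : Prop := ∀ v : T.V, T.deg v ≠ 2

/-- The set of edges lying on the path between two vertices. -/
def pathEdges (T : WTree n) (u v : T.V) : Set (Sym2 T.V) :=
  {e | ∃ p : T.G.Walk u v, p.IsPath ∧ e ∈ p.edges}

/-- The edge set of the minimal subtree containing the leaves in `S`. -/
def subtreeEdges (T : WTree n) (S : Set (Fin n)) : Set (Sym2 T.V) :=
  {e | ∃ i ∈ S, ∃ j ∈ S, e ∈ T.pathEdges (T.leaf i) (T.leaf j)}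

/-- `D_I(T)`: the weight of the minimal subtree of `T` containing the leaves in `I`. -/
noncomputable def D (T : WTree n) (I : Finset (Fin n)) : ℝ :=
  ∑ᶠ e ∈ T.subtreeEdges ↑I, T.w e

/-- The total weight of the tree. -/
noncomputable def Dtot (T : WTree n) : ℝ := ∑ᶠ e ∈ T.G.edgeSet, T.w e

/-- An edge is a twig edge if it lies on the path from some leaf to the nearest node. -/
def IsTwigEdge (T : WTree n) (e : Sym2 T.V) : Prop :=
  ∃ (i : Fin n) (v : T.V), T.IsNode v ∧
    ∃ p : T.G.Walk (T.leaf i) v, p.IsPath ∧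
      (∀ u ∈ p.support, T.IsNode u → u = v) ∧ e ∈ p.edges

/-- Internal-nonzero-weighted: every internal (non-twig) edge has nonzero weight. -/
def InternalNonzero (T : WTree n) : Prop :=
  ∀ e ∈ T.G.edgeSet, ¬ T.IsTwigEdge e → T.w e ≠ 0

/-- Positive-weighted: all edge weights are positive. -/
def PositiveWeighted (T : WTree n) : Prop := ∀ e ∈ T.G.edgeSet, 0 < T.w e

/-- The leaves lying on the side of vertex `a` after removing the edge `e`. -/
def sideLeaves (T : WTree n) (e : Sym2 T.V) (a : T.V) : Set (Fin n) :=
  {i | e ∉ T.pathEdges (T.leaf i) a}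

/-- A pseudostar of kind `(n, k)`: every edge divides the leaf set into two parts,
at least one of which has cardinality `≥ k`. -/
def IsPseudostar (T : WTree n) (k : ℕ) : Prop :=
  ∀ a b : T.V, T.G.Adj a b →
    k ≤ (T.sideLeaves s(a, b) a).ncard ∨ k ≤ (T.sideLeaves s(a, b) b).ncard

/-- `T` realizes the family `D₀` of `k`-weights. -/
def Realizes (T : WTree n) (k : ℕ) (D₀ : Finset (Fin n) → ℝ) : Prop :=
  ∀ I : Finset (Fin n), I.card = k → T.D I = D₀ I

/-- Two leaves are neighbours if the path between them contains exactly one node. -/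
def Neighbours (T : WTree n) (i j : Fin n) : Prop :=
  i ≠ j ∧ ∃ p : T.G.Walk (T.leaf i) (T.leaf j), p.IsPath ∧
    ∃! v : T.V, v ∈ p.support ∧ T.IsNode v

/-- The Buneman index `⟨i,j | l,m⟩` holds iff the paths `i–j` and `l–m` are disjoint,
equivalently in `T|_{i,j,l,m}` the leaves `i,j` are neighbours, `l,m` are neighbours
and `i,l` are not neighbours. -/
def Buneman (T : WTree n) (i j l m : Fin n) : Prop :=
  ∀ (p : T.G.Walk (T.leaf i) (T.leaf j)) (q : T.G.Walk (T.leaf l) (T.leaf m)),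
    p.IsPath → q.IsPath → ∀ v : T.V, v ∈ p.support → v ∉ q.support

/-- The minimal subtree spanned by the four leaves `i,j,l,m` is a star (i.e. all
pairwise paths share a common vertex). -/
def StarQuartet (T : WTree n) (i j l m : Fin n) : Prop :=
  ∃ c : T.V, ∀ x ∈ ({i, j, l, m} : Set (Fin n)), ∀ y ∈ ({i, j, l, m} : Set (Fin n)),
    x ≠ y → ∀ p : T.G.Walk (T.leaf x) (T.leaf y), p.IsPath → c ∈ p.support

/-- A cherry: a set of leaves pairwise neighbours. -/
def IsCherry (T : WTree n) (C : Set (Fin n)) : Prop :=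
  ∀ i ∈ C, ∀ j ∈ C, i ≠ j → T.Neighbours i j

/-- A complete cherry: a cherry not strictly contained in another cherry. -/
def IsCompleteCherry (T : WTree n) (C : Set (Fin n)) : Prop :=
  T.IsCherry C ∧ ¬ ∃ C' : Set (Fin n), T.IsCherry C' ∧ C ⊂ C'

/-- A star is a tree with only one node. -/
def IsStar (T : WTree n) : Prop := ∃! v : T.V, T.IsNode v

/-- `x` is the median of the three leaves `a,b,c`: it lies on all three pairwise paths. -/
def IsMedian (T : WTree n) (a b c : Fin n) (x : T.V) : Prop :=
  (∀ p : T.G.Walk (T.leaf a) (T.leaf b), p.IsPath → x ∈ p.support) ∧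
  (∀ p : T.G.Walk (T.leaf a) (T.leaf c), p.IsPath → x ∈ p.support) ∧
  (∀ p : T.G.Walk (T.leaf b) (T.leaf c), p.IsPath → x ∈ p.support)

/-- The weight of the twig associated to the leaf `i` (the path from the leaf to the
nearest node). -/
noncomputable def twigWeight (T : WTree n) (i : Fin n) : ℝ :=
  ∑ᶠ e ∈ {e : Sym2 T.V | ∃ v : T.V, T.IsNode v ∧
      ∃ p : T.G.Walk (T.leaf i) v, p.IsPath ∧
        (∀ u ∈ p.support, T.IsNode u → u = v) ∧ e ∈ p.edges}, T.w e

/-- Two weighted trees with leaf set `Fin n` are equal (isomorphic respecting the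
leaf labels and the weights). -/
def Isom (T T' : WTree n) : Prop :=
  ∃ φ : T.V ≃ T'.V,
    (∀ a b : T.V, T.G.Adj a b ↔ T'.G.Adj (φ a) (φ b)) ∧
    (∀ i : Fin n, φ (T.leaf i) = T'.leaf i) ∧
    (∀ a b : T.V, T.w s(a, b) = T'.w s(φ a, φ b))

/-- `T'` is obtained from `T` by the `k`-IO operation on the edge `{a, b}`:
the edge divides the leaf set into two parts each of cardinality `< k`; it is
contracted (via the quotient map `φ`) and `w{a,b}/k` is added to the weight of
every twig (i.e. to every pendant edge). -/
def IOStepOn (k : ℕ) (T T' : WTree n) (a b : T.V) : Prop :=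
  T.G.Adj a b ∧
  (T.sideLeaves s(a, b) a).ncard < k ∧ (T.sideLeaves s(a, b) b).ncard < k ∧
  ∃ φ : T.V → T'.V,
    Function.Surjective φ ∧ φ a = φ b ∧
    (∀ x y : T.V, φ x = φ y → x = y ∨ s(x, y) = s(a, b)) ∧
    (∀ i : Fin n, φ (T.leaf i) = T'.leaf i) ∧
    (∀ u v : T'.V, T'.G.Adj u v ↔
      ∃ x y : T.V, φ x = u ∧ φ y = v ∧ T.G.Adj x y ∧ s(x, y) ≠ s(a, b)) ∧
    (∀ x y : T.V, T.G.Adj x y → s(x, y) ≠ s(a, b) →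
      ((∃ i : Fin n, T.leaf i = x ∨ T.leaf i = y) →
        T'.w s(φ x, φ y) = T.w s(x, y) + T.w s(a, b) / k) ∧
      (¬ (∃ i : Fin n, T.leaf i = x ∨ T.leaf i = y) →
        T'.w s(φ x, φ y) = T.w s(x, y)))

/-- `T'` is obtained from `T` by a `k`-IO operation. -/
def IOStep (k : ℕ) (T T' : WTree n) : Prop := ∃ a b : T.V, IOStepOn k T T' a b

/-- `T'` is obtained from `T` by a `k`-OI operation (the inverse of a `k`-IO operation). -/
def OIStep (k : ℕ) (T T' : WTree n) : Prop := IOStep k T' T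

/-- `T'` is obtained from `T` by inserting an internal edge of weight `0`
(the inverse of contracting it). -/
def InsertZeroStep (T T' : WTree n) : Prop :=
  ∃ a b : T'.V, T'.G.Adj a b ∧ ¬ T'.IsTwigEdge s(a, b) ∧ T'.w s(a, b) = 0 ∧
    ∃ φ : T'.V → T.V,
      Function.Surjective φ ∧ φ a = φ b ∧
      (∀ x y : T'.V, φ x = φ y → x = y ∨ s(x, y) = s(a, b)) ∧
      (∀ i : Fin n, φ (T'.leaf i) = T.leaf i) ∧
      (∀ u v : T.V, T.G.Adj u v ↔
        ∃ x y : T'.V, φ x = u ∧ φ y = v ∧ T'.G.Adj x y ∧ s(x, y) ≠ s(a, b)) ∧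
      (∀ x y : T'.V, T'.G.Adj x y → s(x, y) ≠ s(a, b) → T.w s(φ x, φ y) = T'.w s(x, y))

/-- Replace the weight function of `T`. -/
def reweight (T : WTree n) (w' : Sym2 T.V → ℝ)
    (h : ∀ e, e ∉ T.G.edgeSet → w' e = 0) : WTree n :=
  { T with w := w', wSupport := h }

end WTree

/-! Each side of `ē = s(a, b)` has fewer than `k` leaves, so every `k`-subset `I` has leaves on
both sides: the minimal subtree of `I` contains `ē` and exactly the `k` pendant edges of the
leaves of `I`. Adding `z` to `ē` and subtracting `z / k` from every pendant edge therefore leaves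
each `D_I` unchanged, while the total weight changes by `z - n z / k`. -/

namespace SimpleGraph

variable {V : Type*} {G : SimpleGraph V}

theorem Reachable.deleteEdges_reachable_or {a b v : V} (h : G.Reachable v a) :
    (G.deleteEdges {s(a, b)}).Reachable v a ∨ (G.deleteEdges {s(a, b)}).Reachable v b := by
  obtain ⟨p⟩ := h
  induction p with
  | nil => exact .inl .rfl
  | @cons v x a hvx _ ih =>
    by_cases he : s(v, x) = s(a, b)
    · rcases Sym2.eq_iff.1 he with ⟨rfl, -⟩ | ⟨rfl, -⟩
      · exact .inl .rfl
      · exact .inr .rfl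
    · have hvx' : (G.deleteEdges {s(a, b)}).Adj v x := by simp [hvx, he]
      exact ih.imp hvx'.reachable.trans hvx'.reachable.trans

end SimpleGraph

namespace WTree

open SimpleGraph

variable {n : ℕ} (T : WTree n)

theorem mem_pathEdges_iff {e : Sym2 T.V} {u v : T.V} :
    e ∈ T.pathEdges u v ↔ ¬ (T.G.deleteEdges {e}).Reachable u v := by
  constructor
  · rintro ⟨p, hp, hep⟩ ⟨q⟩
    classical
    let r := q.mapLe (T.G.deleteEdges_le {e})
    have hpr : p = r.bypass := (T.isTree.existsUnique_path u v).unique hp r.bypass_isPath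
    have her : e ∈ q.edges := by
      simpa [r, Walk.edges_mapLe_eq_edges] using r.edges_bypass_subset_edges (hpr ▸ hep)
    simpa using q.edges_subset_edgeSet her
  · intro h
    obtain ⟨p, hp⟩ := (T.isTree.existsUnique_path u v).exists
    exact ⟨p, hp, p.mem_edges_of_not_reachable_deleteEdges h⟩

theorem mem_sideLeaves_iff {e : Sym2 T.V} {c : T.V} {i : Fin n} :
    i ∈ T.sideLeaves e c ↔ (T.G.deleteEdges {e}).Reachable (T.leaf i) c := by
  simp [sideLeaves, mem_pathEdges_iff]

theorem edge_mem_subtreeEdges {k : ℕ} {a b : T.V}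
    (ha : (T.sideLeaves s(a, b) a).ncard < k) (hb : (T.sideLeaves s(a, b) b).ncard < k)
    {I : Finset (Fin n)} (hI : I.card = k) : s(a, b) ∈ T.subtreeEdges I := by
  have hIk : (I : Set (Fin n)).ncard = k := by rw [Set.ncard_coe_finset, hI]
  obtain ⟨i, hiI, hia⟩ := Set.exists_mem_notMem_of_ncard_lt_ncard (hIk ▸ ha)
  obtain ⟨j, hjI, hjb⟩ := Set.exists_mem_notMem_of_ncard_lt_ncard (hIk ▸ hb)
  rw [mem_sideLeaves_iff] at hia hjb
  refine ⟨i, hiI, j, hjI, T.mem_pathEdges_iff.2 fun hij => hia ?_⟩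
  have hja := ((T.isTree.connected.preconnected (T.leaf j) a).deleteEdges_reachable_or
    (b := b)).resolve_right hjb
  exact hij.trans hja

theorem exists_neighborSet_leaf_eq (i : Fin n) : ∃ c, T.G.neighborSet (T.leaf i) = {c} :=
  Set.ncard_eq_one.1 ((T.leafSpec _).2 ⟨i, rfl⟩)

noncomputable def nbr (i : Fin n) : T.V := (T.exists_neighborSet_leaf_eq i).choose

theorem neighborSet_leaf (i : Fin n) : T.G.neighborSet (T.leaf i) = {T.nbr i} :=
  (T.exists_neighborSet_leaf_eq i).choose_spec

theorem adj_leaf_iff {i : Fin n} {c : T.V} : T.G.Adj (T.leaf i) c ↔ c = T.nbr i := by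
  rw [← mem_neighborSet, neighborSet_leaf, Set.mem_singleton_iff]

noncomputable def pendant (i : Fin n) : Sym2 T.V := s(T.leaf i, T.nbr i)

theorem pendant_mem_edgeSet (i : Fin n) : T.pendant i ∈ T.G.edgeSet :=
  T.adj_leaf_iff.2 rfl

theorem pendant_mem_edges {i : Fin n} {v : T.V} (p : T.G.Walk (T.leaf i) v)
    (hne : T.leaf i ≠ v) : T.pendant i ∈ p.edges := by
  cases p with
  | nil => exact absurd rfl hne
  | cons h q => simp [pendant, T.adj_leaf_iff.1 h]

theorem pendant_mem_subtreeEdges_iff {I : Finset (Fin n)} (hI : 2 ≤ I.card) {i : Fin n} :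
    T.pendant i ∈ T.subtreeEdges I ↔ i ∈ I := by
  constructor
  · rintro ⟨j, hj, l, hl, p, hp, he⟩
    have hi : T.leaf i ∈ p.support := p.fst_mem_support_of_mem_edges he
    by_contra hiI
    refine hp.isTrail.not_mem_support_of_subsingleton_neighborSet ?_ ?_ ?_ hi
    · exact fun h => hiI (T.leafInj h ▸ hj)
    · exact fun h => hiI (T.leafInj h ▸ hl)
    · rw [neighborSet_leaf]; exact Set.subsingleton_singleton
  · intro hi
    obtain ⟨j, hj, hji⟩ := Finset.exists_mem_ne hI i
    obtain ⟨p, hp⟩ := (T.isTree.existsUnique_path (T.leaf i) (T.leaf j)).exists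
    exact ⟨i, hi, j, hj, p, hp, T.pendant_mem_edges p fun h => hji (T.leafInj h).symm⟩

open Classical in
/-- The paper's `w'` with `c = z / k`: the twig of each leaf loses `c` at its pendant edge. -/
noncomputable def shiftWeight (e₀ : Sym2 T.V) (z c : ℝ) (e : Sym2 T.V) : ℝ :=
  T.w e + (if e = e₀ then z else 0) - ∑ i, if T.pendant i = e then c else 0

theorem shiftWeight_eq_zero {e₀ e : Sym2 T.V} (z c : ℝ) (he₀ : e₀ ∈ T.G.edgeSet)
    (he : e ∉ T.G.edgeSet) : T.shiftWeight e₀ z c e = 0 := by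
  have hne : e ≠ e₀ := by rintro rfl; exact he he₀
  have hpend : ∀ i, T.pendant i ≠ e := by rintro i rfl; exact he (T.pendant_mem_edgeSet i)
  simp [shiftWeight, T.wSupport e he, hne, hpend]

theorem finsum_mem_shiftWeight {e₀ : Sym2 T.V} (z c : ℝ) {S : Set (Sym2 T.V)} (he₀ : e₀ ∈ S) :
    ∑ᶠ e ∈ S, T.shiftWeight e₀ z c e
      = ∑ᶠ e ∈ S, T.w e + z - {i | T.pendant i ∈ S}.ncard * c := by
  classical
  have := T.fintypeV
  have hS : S.Finite := S.toFinite
  rw [finsum_mem_eq_finite_toFinset_sum _ hS, finsum_mem_eq_finite_toFinset_sum _ hS]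
  simp only [shiftWeight, Finset.sum_sub_distrib, Finset.sum_add_distrib, Finset.sum_ite_eq',
    hS.mem_toFinset, he₀, if_true]
  rw [Finset.sum_comm]
  simp [Finset.sum_ite_eq, Set.ncard_eq_toFinset_card', Finset.sum_ite]

end WTree

theorem statement18_general (n k : ℕ) (h3 : 3 ≤ k)
    (T : WTree n) (a b : T.V) (hab : T.G.Adj a b)
    (ha : (T.sideLeaves s(a, b) a).ncard < k)
    (hb : (T.sideLeaves s(a, b) b).ncard < k)
    (z : ℝ) :
    ∃ (w' : Sym2 T.V → ℝ) (hw' : ∀ e, e ∉ T.G.edgeSet → w' e = 0),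
      (∀ I : Finset (Fin n), I.card = k → (T.reweight w' hw').D I = T.D I) ∧
      (T.reweight w' hw').Dtot = T.Dtot - (((n : ℝ) - (k : ℝ)) / (k : ℝ)) * z := by
  have hk : (k : ℝ) ≠ 0 := Nat.cast_ne_zero.2 (by omega)
  refine ⟨T.shiftWeight s(a, b) z (z / k), fun _ => T.shiftWeight_eq_zero z (z / k) hab,
    fun I hI => ?_, ?_⟩
  · have hpend : {i | T.pendant i ∈ T.subtreeEdges I} = I := by
      ext i
      exact T.pendant_mem_subtreeEdges_iff (by omega)
    change ∑ᶠ e ∈ T.subtreeEdges I, T.shiftWeight s(a, b) z (z / k) e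
      = ∑ᶠ e ∈ T.subtreeEdges I, T.w e
    rw [T.finsum_mem_shiftWeight z (z / k) (T.edge_mem_subtreeEdges ha hb hI), hpend,
      Set.ncard_coe_finset, hI, mul_div_cancel₀ z hk, add_sub_cancel_right]
  · have hpend : {i | T.pendant i ∈ T.G.edgeSet} = Set.univ :=
      Set.eq_univ_of_forall T.pendant_mem_edgeSet
    change ∑ᶠ e ∈ T.G.edgeSet, T.shiftWeight s(a, b) z (z / k) e
      = ∑ᶠ e ∈ T.G.edgeSet, T.w e - _
    rw [T.finsum_mem_shiftWeight z (z / k) hab, hpend, Set.ncard_univ, Nat.card_eq_fintype_card,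
      Fintype.card_fin]
    field_simp
    ring

/-- let `3 ≤ k ≤ n-1` and let `T` be a weighted tree with leaf set `[n]`
having an edge `{a,b}` dividing `[n]` into two sets each of cardinality `< k`. Then for
every `z ∈ ℝ` there is a weight function `w'` on `T` giving the same `k`-weights and with
total weight `D_tot(T) − ((n−k)/k)·z`. -/
theorem statement18 (n k : ℕ) (h3 : 3 ≤ k) (hk : k ≤ n - 1)
    (T : WTree n) (a b : T.V) (hab : T.G.Adj a b)
    (ha : (T.sideLeaves s(a, b) a).ncard < k)
    (hb : (T.sideLeaves s(a, b) b).ncard < k)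
    (z : ℝ) :
    ∃ (w' : Sym2 T.V → ℝ) (hw' : ∀ e, e ∉ T.G.edgeSet → w' e = 0),
      (∀ I : Finset (Fin n), I.card = k → (T.reweight w' hw').D I = T.D I) ∧
      (T.reweight w' hw').Dtot = T.Dtot - (((n : ℝ) - (k : ℝ)) / (k : ℝ)) * z :=
  statement18_general n k h3 T a b hab ha hb z
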